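/- Fix n ≥ 2 and let G_{n+1} be the directed graph whose vertices are the n-faces of the (n+1)-cube I^{n+1}, with an edge from vertex a to vertex b for each (n−1)-face that is an outgoing subface of a and an incoming subface of b. Let L_i (1 ≤ i ≤ n+1) be the n-face with digit 0 at position i if i is odd, digit 1 if i is even (asterisks elsewhere), and let R_i be the n-face with digit 1 at position i if i is odd, digit 0 if i is even (asterisks elsewhere). Then: (1) every n-face of I^{n+1} is exactly one of L_1,…,L_{n+1},R_1,…,R_{n+1}; (2) there is an edge from L_i to L_j if and only if i < j; (3) there is an edge from R_j to R_i if and only if i < j; (4) there are no edges between any L_i and any R_j. Consequently G_{n+1} has exactly two weakly connected components, each a transitive tournament on n+1 vertices, so the reachability relation is the strict linear order L_1 < L_2 < … < L_{n+1} on the first component and R_{n+1} < … < R_2 < R_1 on the second. -/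

import Mathlib

/-- A face of the `N`-dimensional cube `I^N`, encoded as a function assigning to each
coordinate position either a digit (`some false` = 0, `some true` = 1) or an
asterisk (`none`). -/
abbrev CubeFace (N : ℕ) := Fin N → Option Bool

/-- `τ` is a `k`-face: exactly `k` positions carry an asterisk. -/
def IsFace {N : ℕ} (k : ℕ) (τ : CubeFace N) : Prop :=
  (Finset.filter (fun i => τ i = none) Finset.univ).card = k

/-- The digit `κ` associated to the asterisk position `p` of `f`: if `p` is the `k`-th
asterisk position of `f` (counting 1-based from the left), then `κ = 0` (i.e. `false`)
for odd `k` and `κ = 1` (i.e. `true`) for even `k`.  Equivalently, `κ` is `true` iff the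
number of asterisk positions strictly before `p` is odd. -/
def kappa {N : ℕ} (f : CubeFace N) (p : Fin N) : Bool :=
  decide (Odd ((Finset.filter (fun q => q < p ∧ f q = none) Finset.univ).card))

/-- `g` is obtained from `f` by replacing the asterisk at position `p` by the digit `d`. -/
def SubfaceAt {N : ℕ} (f g : CubeFace N) (p : Fin N) (d : Bool) : Prop :=
  f p = none ∧ g p = some d ∧ ∀ q, q ≠ p → g q = f q

/-- `g` is an incoming subface of `f`: it is obtained from `f` by replacing the asterisk
at some position `p` by the digit `κ(f, p)`. -/
def Incoming {N : ℕ} (f g : CubeFace N) : Prop := ∃ p, SubfaceAt f g p (kappa f p)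

/-- `g` is an outgoing subface of `f`: it is obtained from `f` by replacing the asterisk
at some position `p` by the digit different from `κ(f, p)`. -/
def Outgoing {N : ℕ} (f g : CubeFace N) : Prop := ∃ p, SubfaceAt f g p (!kappa f p)

/-- The order of a face `g`: the number of `n`-faces of the cube for which `g` is an
incoming subface. -/
noncomputable def faceOrder {N : ℕ} (n : ℕ) (g : CubeFace N) : ℕ :=
  Nat.card {f : CubeFace N // IsFace n f ∧ Incoming f g}

/-- The `n`-face `L_i` of the `(n+1)`-cube: digit 0 at position `i` if the 1-based
position is odd, digit 1 if it is even, asterisks elsewhere. -/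
def Lface (n : ℕ) (i : Fin (n + 1)) : CubeFace (n + 1) :=
  fun j => if j = i then some (decide (Odd (i : ℕ))) else none

/-- The `n`-face `R_i` of the `(n+1)`-cube: digit 1 at position `i` if the 1-based
position is odd, digit 0 if it is even, asterisks elsewhere. -/
def Rface (n : ℕ) (i : Fin (n + 1)) : CubeFace (n + 1) :=
  fun q => if q = i then some (decide (Even (i : ℕ))) else none

/-- The edge relation of the directed graph `G_{n+1}`: its vertices are the `n`-faces of
the `(n+1)`-cube, and there is an edge from `a` to `b` whenever some `(n-1)`-face is an
outgoing subface of `a` and an incoming subface of `b`. -/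
def GEdge (n : ℕ) (a b : CubeFace (n + 1)) : Prop :=
  IsFace n a ∧ IsFace n b ∧
    ∃ g : CubeFace (n + 1), IsFace (n - 1) g ∧ Outgoing a g ∧ Incoming b g

/-!
An `n`-face of `I^{n+1}` has a single digit; write it as the digit `Odd i xor s` at position
`i`, so that `s = false` gives `L_i` and `s = true` gives `R_i`. Exactly `p - [i < p]`
asterisks of it precede a position `p`, so its `κ` at `p` is `Odd p xor [i < p]`. An
`(n-1)`-face has two digits, and it is a common subface of two `n`-faces only if it carries
the digit of each at that face's position; comparing these digits with `κ` shows that there is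
an edge from the face `(s, i)` to the face `(t, j)` iff `s = t`, `i ≠ j` and `s = [j < i]`.
So edges stay on one side and move the index up on the `L` side and down on the `R` side,
which makes reachability the order on the indices.
-/

open Function

theorem Relation.transGen_iff_of_rel_iff {α β : Type*} {r : α → α → Prop}
    {lt : β → β → Prop} [IsTrans β lt] {f : β → α} (hf : Injective f)
    (hr : ∀ i y, r (f i) y ↔ ∃ j, lt i j ∧ y = f j) {i j : β} :
    TransGen r (f i) (f j) ↔ lt i j := by
  refine ⟨fun h => ?_, fun h => .single ((hr i (f j)).mpr ⟨j, h, rfl⟩)⟩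
  suffices ∀ y, TransGen r (f i) y → ∃ k, lt i k ∧ y = f k by
    obtain ⟨k, hik, hk⟩ := this (f j) h
    exact hf hk ▸ hik
  intro y hy
  induction hy with
  | single h => exact (hr i _).mp h
  | tail _ h ih =>
    obtain ⟨k, hik, rfl⟩ := ih
    obtain ⟨l, hkl, rfl⟩ := (hr k _).mp h
    exact ⟨l, _root_.trans hik hkl, rfl⟩

namespace CubeFace

variable {N n : ℕ}

theorem subfaceAt_iff {f g : CubeFace N} {p : Fin N} {d : Bool} :
    SubfaceAt f g p d ↔ f p = none ∧ g = update f p (some d) := by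
  refine ⟨fun ⟨hp, hg, h⟩ => ⟨hp, funext fun q => ?_⟩,
    fun ⟨hp, hg⟩ => ⟨hp, ?_, fun q hq => ?_⟩⟩
  · by_cases hq : q = p
    · subst hq; simp [hg]
    · simp [hq, h q hq]
  all_goals simp_all

def single (i : Fin (n + 1)) (b : Bool) : CubeFace (n + 1) :=
  fun q => if q = i then some b else none

theorem isFace_single (i : Fin (n + 1)) (b : Bool) : IsFace n (single i b) := by
  have : Finset.filter (fun q => single i b q = none) Finset.univ = {i}ᶜ := by
    ext q; by_cases h : q = i <;> simp [single, h]
  simp [IsFace, this, Finset.card_compl]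

theorem isFace_update_single {i p : Fin (n + 1)} (hp : p ≠ i) (b d : Bool) :
    IsFace (n - 1) (update (single i b) p (some d)) := by
  have : Finset.filter (fun q => update (single i b) p (some d) q = none) Finset.univ
      = {p, i}ᶜ := by
    ext q
    by_cases h : q = p <;> by_cases h' : q = i <;> simp [single, update_apply, h, h', hp.symm]
  rw [IsFace, this, Finset.card_compl, Finset.card_pair hp]
  simp

theorem isFace_iff_exists_single {f : CubeFace (n + 1)} :
    IsFace n f ↔ ∃ i b, f = single i b := by
  refine ⟨fun h => ?_, fun ⟨i, b, hf⟩ => hf ▸ isFace_single i b⟩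
  have hcard : (Finset.filter (fun q => f q ≠ none) Finset.univ).card = 1 := by
    rw [← Finset.compl_filter, Finset.card_compl, Fintype.card_fin]
    rw [IsFace] at h
    omega
  obtain ⟨i, hi⟩ := Finset.card_eq_one.mp hcard
  have hdigit : ∀ q, f q ≠ none ↔ q = i := fun q => by
    simpa using Finset.ext_iff.mp hi q
  obtain ⟨b, hb⟩ := Option.ne_none_iff_exists'.mp ((hdigit i).mpr rfl)
  refine ⟨i, b, funext fun q => ?_⟩
  by_cases hq : q = i
  · simp [single, hq, hb]
  · simpa [single, hq] using mt (hdigit q).mp hq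

theorem kappa_single (i p : Fin (n + 1)) (b : Bool) :
    kappa (single i b) p = (decide (Odd (p : ℕ)) ^^ decide (i < p)) := by
  have hset : Finset.filter (fun q => q < p ∧ single i b q = none) Finset.univ
      = (Finset.Iio p).erase i := by
    ext q; by_cases h : q = i <;> simp [single, h, and_comm]
  rw [kappa, hset]
  by_cases hip : i < p
  · rw [Finset.card_erase_of_mem (Finset.mem_Iio.mpr hip), Fin.card_Iio]
    obtain ⟨m, hm⟩ : ∃ m, (p : ℕ) = m + 1 := Nat.exists_eq_add_one.mpr (by omega)
    simp [hip, hm, Nat.odd_add_one, ← Nat.not_even_iff_odd]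
  · rw [Finset.erase_eq_of_notMem (by simpa using hip), Fin.card_Iio]
    simp [hip]

theorem update_single_comm {i j : Fin (n + 1)} (h : i ≠ j) (b c : Bool) :
    update (single i b) j (some c) = update (single j c) i (some b) := by
  funext q
  by_cases hi : q = i <;> by_cases hj : q = j <;> simp_all [single]

theorem update_single_inj {i j p p' : Fin (n + 1)} (hp : p ≠ i) (hp' : p' ≠ j)
    {b c d d' : Bool} :
    update (single i b) p (some d) = update (single j c) p' (some d') ↔
      (p = p' ∧ i = j ∧ b = c ∧ d = d') ∨ (p = j ∧ p' = i ∧ d = c ∧ b = d') := by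
  refine ⟨fun h => ?_, ?_⟩
  · have hi := congrFun h i
    have hj := congrFun h j
    have hpp := congrFun h p
    simp only [update_apply, single, ↓reduceIte] at hi hj hpp
    grind
  · rintro (⟨rfl, rfl, rfl, rfl⟩ | ⟨rfl, rfl, rfl, rfl⟩)
    · rfl
    · exact update_single_comm hp' _ _

theorem gEdge_single_iff {i j : Fin (n + 1)} {b c : Bool} :
    GEdge n (single i b) (single j c) ↔
      i ≠ j ∧ b = kappa (single j c) i ∧ c = !kappa (single i b) j := by
  constructor
  · rintro ⟨-, -, g, -, ⟨p, hout⟩, ⟨p', hin⟩⟩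
    obtain ⟨hp, rfl⟩ := subfaceAt_iff.mp hout
    obtain ⟨hp', hg⟩ := subfaceAt_iff.mp hin
    have hpi : p ≠ i := by simpa [single] using hp
    have hp'j : p' ≠ j := by simpa [single] using hp'
    rcases (update_single_inj hpi hp'j).mp hg with ⟨rfl, rfl, -, hd⟩ | ⟨rfl, rfl, hc, hb⟩
    · -- `κ (single i ·) p` does not depend on the digit, so the digit at `p` would be `κ` and `!κ`
      simp [kappa_single] at hd
    · exact ⟨hpi.symm, hb, hc.symm⟩
  · rintro ⟨hij, hb, hc⟩
    refine ⟨isFace_single i b, isFace_single j c, update (single i b) j (some c),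
      isFace_update_single hij.symm b c, ⟨j, ?_⟩, ⟨i, ?_⟩⟩
    · exact subfaceAt_iff.mpr ⟨by simp [single, hij.symm], by rw [hc]⟩
    · exact subfaceAt_iff.mpr ⟨by simp [single, hij], by rw [← hb, update_single_comm hij]⟩

def signedFace (s : Bool) (i : Fin (n + 1)) : CubeFace (n + 1) :=
  single i (decide (Odd (i : ℕ)) ^^ s)

theorem gEdge_signedFace_iff {s t : Bool} {i j : Fin (n + 1)} :
    GEdge n (signedFace s i) (signedFace t j) ↔ s = t ∧ i ≠ j ∧ s = decide (j < i) := by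
  rw [signedFace, signedFace, gEdge_single_iff, kappa_single, kappa_single]
  rcases lt_trichotomy i j with h | rfl | h
  · cases s <;> cases t <;> simp [h, h.ne, h.not_gt]
  · simp
  · cases s <;> cases t <;> simp [h, h.ne', h.not_gt]

theorem isFace_iff_exists_signedFace {f : CubeFace (n + 1)} :
    IsFace n f ↔ ∃ s i, f = signedFace s i := by
  rw [isFace_iff_exists_single]
  constructor
  · rintro ⟨i, b, rfl⟩
    exact ⟨decide (Odd (i : ℕ)) ^^ b, i, by simp [signedFace]⟩
  · rintro ⟨s, i, rfl⟩
    exact ⟨i, _, rfl⟩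

theorem signedFace_inj {s t : Bool} {i j : Fin (n + 1)} :
    signedFace s i = signedFace t j ↔ s = t ∧ i = j := by
  refine ⟨fun h => ?_, fun ⟨hs, hi⟩ => hs ▸ hi ▸ rfl⟩
  have hi := congrFun h i
  by_cases hij : i = j
  · subst hij
    simpa [signedFace, single] using hi
  · simp [signedFace, single, hij] at hi

theorem Lface_eq_signedFace : Lface n = signedFace false := by
  funext i
  rw [signedFace, Bool.xor_false]
  rfl

theorem Rface_eq_signedFace : Rface n = signedFace true := by
  funext i
  simp only [signedFace, Bool.xor_true, ← decide_not, Nat.not_odd_iff_even]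
  rfl

theorem isFace_iff_Lface_or_Rface {f : CubeFace (n + 1)} :
    IsFace n f ↔ (∃ i, f = Lface n i) ∨ ∃ i, f = Rface n i := by
  rw [isFace_iff_exists_signedFace, Lface_eq_signedFace, Rface_eq_signedFace, Bool.exists_bool]

theorem Lface_injective : Injective (Lface n) := by
  rw [Lface_eq_signedFace]
  exact fun i j h => (signedFace_inj.mp h).2

theorem Rface_injective : Injective (Rface n) := by
  rw [Rface_eq_signedFace]
  exact fun i j h => (signedFace_inj.mp h).2

theorem Lface_ne_Rface (i j : Fin (n + 1)) : Lface n i ≠ Rface n j := by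
  simp [Lface_eq_signedFace, Rface_eq_signedFace, signedFace_inj]

theorem gEdge_Lface_iff {i j : Fin (n + 1)} : GEdge n (Lface n i) (Lface n j) ↔ i < j := by
  rw [Lface_eq_signedFace, gEdge_signedFace_iff]
  simpa [and_comm] using lt_iff_le_and_ne.symm

theorem gEdge_Rface_iff {i j : Fin (n + 1)} : GEdge n (Rface n j) (Rface n i) ↔ i < j := by
  rw [Rface_eq_signedFace, gEdge_signedFace_iff]
  simpa using fun h : i < j => h.ne'

theorem not_gEdge_Lface_Rface (i j : Fin (n + 1)) : ¬ GEdge n (Lface n i) (Rface n j) := by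
  simp [Lface_eq_signedFace, Rface_eq_signedFace, gEdge_signedFace_iff]

theorem not_gEdge_Rface_Lface (i j : Fin (n + 1)) : ¬ GEdge n (Rface n i) (Lface n j) := by
  simp [Lface_eq_signedFace, Rface_eq_signedFace, gEdge_signedFace_iff]

theorem gEdge_Lface_iff_exists {i : Fin (n + 1)} {y : CubeFace (n + 1)} :
    GEdge n (Lface n i) y ↔ ∃ j, i < j ∧ y = Lface n j := by
  refine ⟨fun h => ?_, fun ⟨j, hij, hy⟩ => hy ▸ gEdge_Lface_iff.mpr hij⟩
  rcases isFace_iff_Lface_or_Rface.mp h.2.1 with ⟨j, rfl⟩ | ⟨j, rfl⟩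
  · exact ⟨j, gEdge_Lface_iff.mp h, rfl⟩
  · exact absurd h (not_gEdge_Lface_Rface i j)

theorem gEdge_Rface_iff_exists {j : Fin (n + 1)} {y : CubeFace (n + 1)} :
    GEdge n (Rface n j) y ↔ ∃ i, i < j ∧ y = Rface n i := by
  refine ⟨fun h => ?_, fun ⟨i, hij, hy⟩ => hy ▸ gEdge_Rface_iff.mpr hij⟩
  rcases isFace_iff_Lface_or_Rface.mp h.2.1 with ⟨i, rfl⟩ | ⟨i, rfl⟩
  · exact absurd h (not_gEdge_Rface_Lface j i)
  · exact ⟨i, gEdge_Rface_iff.mp h, rfl⟩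

end CubeFace

open CubeFace

theorem stmt5_general (n : ℕ) :
    (∀ f : CubeFace (n + 1),
        IsFace n f ↔ ((∃ i, f = Lface n i) ∨ (∃ i, f = Rface n i))) ∧
    Function.Injective (Lface n) ∧
    Function.Injective (Rface n) ∧
    (∀ i j, Lface n i ≠ Rface n j) ∧
    (∀ i j, GEdge n (Lface n i) (Lface n j) ↔ i < j) ∧
    (∀ i j, GEdge n (Rface n j) (Rface n i) ↔ i < j) ∧
    (∀ i j, ¬ GEdge n (Lface n i) (Rface n j) ∧ ¬ GEdge n (Rface n i) (Lface n j)) ∧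
    (∀ i j, Relation.TransGen (GEdge n) (Lface n i) (Lface n j) ↔ i < j) ∧
    (∀ i j, Relation.TransGen (GEdge n) (Rface n j) (Rface n i) ↔ i < j) :=
  ⟨fun _ => isFace_iff_Lface_or_Rface, Lface_injective, Rface_injective, Lface_ne_Rface,
    fun _ _ => gEdge_Lface_iff, fun _ _ => gEdge_Rface_iff,
    fun i j => ⟨not_gEdge_Lface_Rface i j, not_gEdge_Rface_Lface i j⟩,
    fun _ _ => Relation.transGen_iff_of_rel_iff Lface_injective fun _ _ => gEdge_Lface_iff_exists,
    fun _ _ => Relation.transGen_iff_of_rel_iff (lt := (· > ·)) Rface_injective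
      fun _ _ => gEdge_Rface_iff_exists⟩

/-- Structure of the graph `G_{n+1}`: (1) the `n`-faces of `I^{n+1}` are exactly
`L_1, …, L_{n+1}, R_1, …, R_{n+1}`, all pairwise distinct; (2) there is an edge
`L_i → L_j` iff `i < j`; (3) there is an edge `R_j → R_i` iff `i < j`; (4) there are no
edges between the `L`'s and the `R`'s.  Consequently the reachability relation is the
strict linear order `L_1 < L_2 < ⋯ < L_{n+1}` on one component, and
`R_{n+1} < ⋯ < R_2 < R_1` on the other. -/
theorem stmt5 (n : ℕ) (hn : 2 ≤ n) :
    (∀ f : CubeFace (n + 1),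
        IsFace n f ↔ ((∃ i, f = Lface n i) ∨ (∃ i, f = Rface n i))) ∧
    Function.Injective (Lface n) ∧
    Function.Injective (Rface n) ∧
    (∀ i j, Lface n i ≠ Rface n j) ∧
    (∀ i j, GEdge n (Lface n i) (Lface n j) ↔ i < j) ∧
    (∀ i j, GEdge n (Rface n j) (Rface n i) ↔ i < j) ∧
    (∀ i j, ¬ GEdge n (Lface n i) (Rface n j) ∧ ¬ GEdge n (Rface n i) (Lface n j)) ∧
    (∀ i j, Relation.TransGen (GEdge n) (Lface n i) (Lface n j) ↔ i < j) ∧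
    (∀ i j, Relation.TransGen (GEdge n) (Rface n j) (Rface n i) ↔ i < j) :=
  stmt5_general n
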